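/- For the two-phase RSIR contact speed S_{M1} = U*_{HLL}((αρu)₁)/U*_{HLL}((αρ)₁): if phase 1 has uniform velocity u₁L = u₁R = u in the initial data, i.e., (αρu)₁K = (αρ)₁K·u for K = L, R, and the flux components satisfy Φ((αρ)₁) = (αρ)₁u and Φ((αρu)₁) = (αρ)₁u² + α₁(p₁ - p_I) with p₁L = p₁R = p_I, then S_{M1} = u, provided U*_{HLL}((αρ)₁) ≠ 0. -/

import Mathlib

/-! Velocity `u` and `p₁ = p_I` make every phase-1 momentum datum (state and flux) equal to `u`
times the corresponding mass datum; the HLL state is linear in the data, so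
`U*((αρu)₁) = U*((αρ)₁) · u`. -/

def hllState {K : Type*} [Field K] (ΦL ΦR SL SR qL qR : K) : K :=
  (ΦR - ΦL + SL * qL - SR * qR) / (SL - SR)

theorem hllState_mul_right {K : Type*} [Field K] (ΦL ΦR SL SR qL qR c : K) :
    hllState (ΦL * c) (ΦR * c) SL SR (qL * c) (qR * c) = hllState ΦL ΦR SL SR qL qR * c := by
  unfold hllState
  ring

theorem two_phase_contact_speed_general (α1L α1R ρ1L ρ1R p1L p1R pI u SL SR : ℝ)
    (hpL : p1L = pI) (hpR : p1R = pI) :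
    let aL := α1L * ρ1L
    let aR := α1R * ρ1R
    let mL := aL * u
    let mR := aR * u
    let ΦaL := aL * u
    let ΦaR := aR * u
    let ΦmL := aL * u ^ 2 + α1L * (p1L - pI)
    let ΦmR := aR * u ^ 2 + α1R * (p1R - pI)
    let Da := (ΦaR - ΦaL + SL * aL - SR * aR) / (SL - SR)
    let Dm := (ΦmR - ΦmL + SL * mL - SR * mR) / (SL - SR)
    Da ≠ 0 → Dm / Da = u := by
  intro aL aR mL mR ΦaL ΦaR ΦmL ΦmR Da Dm hDa
  have hΦmL : ΦmL = ΦaL * u := by simp only [ΦmL, ΦaL, hpL]; ring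
  have hΦmR : ΦmR = ΦaR * u := by simp only [ΦmR, ΦaR, hpR]; ring
  have hDm : Dm = Da * u := by
    change hllState ΦmL ΦmR SL SR (aL * u) (aR * u) = hllState ΦaL ΦaR SL SR aL aR * u
    rw [hΦmL, hΦmR, hllState_mul_right]
  rw [hDm, mul_div_cancel_left₀ u hDa]

/-- The two-phase RSIR contact speed S_M1 equals the common phase-1 velocity u when
the dispersed phase has uniform velocity and pressure p₁ = p_I. -/
theorem two_phase_contact_speed (α1L α1R ρ1L ρ1R p1L p1R pI u SL SR : ℝ)
    (hS : SL ≠ SR) (hpL : p1L = pI) (hpR : p1R = pI) :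
    let aL := α1L * ρ1L
    let aR := α1R * ρ1R
    let mL := aL * u
    let mR := aR * u
    let ΦaL := aL * u
    let ΦaR := aR * u
    let ΦmL := aL * u ^ 2 + α1L * (p1L - pI)
    let ΦmR := aR * u ^ 2 + α1R * (p1R - pI)
    let Da := (ΦaR - ΦaL + SL * aL - SR * aR) / (SL - SR)
    let Dm := (ΦmR - ΦmL + SL * mL - SR * mR) / (SL - SR)
    Da ≠ 0 → Dm / Da = u :=
  two_phase_contact_speed_general α1L α1R ρ1L ρ1R p1L p1R pI u SL SR hpL hpR
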